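/- arXiv:math/0511217 — 4 statements merged into one kernel-verified Lean document; each statement's English description precedes it below -/
import Mathlib

section
/- For γ₁ = (k₁,l₁;m₁,n₁) and γ₂ = (k₂,l₂;m₂,n₂) in SL(2,ℤ) with γ₁ - γ₂ having all even entries, the 4×4 matrix T with block entries T = (1/2)·((k₁+k₂, k₁-k₂, l₁+l₂, l₁-l₂), (k₁-k₂, k₁+k₂, l₁-l₂, l₁+l₂), (m₁+m₂, m₁-m₂, n₁+n₂, n₁-n₂), (m₁-m₂, m₁+m₂, n₁-n₂, n₁+n₂)) is an integer matrix belonging to Sp(4,ℤ). -/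
open Matrix

/-- The standard symplectic form matrix for `Sp(4)`. -/
def J4 : Matrix (Fin 4) (Fin 4) ℚ :=
  !![0, 0, 1, 0; 0, 0, 0, 1; -1, 0, 0, 0; 0, -1, 0, 0]

set_option maxHeartbeats 2000000 in
theorem T_matrix_is_integer_symplectic
    (k₁ l₁ m₁ n₁ k₂ l₂ m₂ n₂ : ℤ)
    (h₁ : k₁ * n₁ - l₁ * m₁ = 1) (h₂ : k₂ * n₂ - l₂ * m₂ = 1)
    (hk : 2 ∣ (k₁ - k₂)) (hl : 2 ∣ (l₁ - l₂))
    (hm : 2 ∣ (m₁ - m₂)) (hn : 2 ∣ (n₁ - n₂)) :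
    let T : Matrix (Fin 4) (Fin 4) ℚ :=
      (1 / 2 : ℚ) •
        !![(k₁ + k₂ : ℚ), k₁ - k₂, l₁ + l₂, l₁ - l₂;
           k₁ - k₂, k₁ + k₂, l₁ - l₂, l₁ + l₂;
           m₁ + m₂, m₁ - m₂, n₁ + n₂, n₁ - n₂;
           m₁ - m₂, m₁ + m₂, n₁ - n₂, n₁ + n₂]
    (∀ i j : Fin 4, ∃ z : ℤ, T i j = (z : ℚ)) ∧ Tᵀ * J4 * T = J4 := by
  intro T
  obtain ⟨a, ha⟩ := hk
  obtain ⟨b, hb⟩ := hl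
  obtain ⟨c, hc⟩ := hm
  obtain ⟨d, hd⟩ := hn
  have ha' : (k₁ : ℚ) - k₂ = 2 * a := by exact_mod_cast ha
  have hb' : (l₁ : ℚ) - l₂ = 2 * b := by exact_mod_cast hb
  have hc' : (m₁ : ℚ) - m₂ = 2 * c := by exact_mod_cast hc
  have hd' : (n₁ : ℚ) - n₂ = 2 * d := by exact_mod_cast hd
  constructor
  · intro i j
    fin_cases i <;> fin_cases j <;> simp [T] <;>
      [exact ⟨k₂ + a, by push_cast; linarith⟩;
       exact ⟨a, by push_cast; linarith⟩;
       exact ⟨l₂ + b, by push_cast; linarith⟩;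
       exact ⟨b, by push_cast; linarith⟩;
       exact ⟨a, by push_cast; linarith⟩;
       exact ⟨k₂ + a, by push_cast; linarith⟩;
       exact ⟨b, by push_cast; linarith⟩;
       exact ⟨l₂ + b, by push_cast; linarith⟩;
       exact ⟨m₂ + c, by push_cast; linarith⟩;
       exact ⟨c, by push_cast; linarith⟩;
       exact ⟨n₂ + d, by push_cast; linarith⟩;
       exact ⟨d, by push_cast; linarith⟩;
       exact ⟨c, by push_cast; linarith⟩;
       exact ⟨m₂ + c, by push_cast; linarith⟩;
       exact ⟨d, by push_cast; linarith⟩;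
       exact ⟨n₂ + d, by push_cast; linarith⟩]
  · have h₁' : (k₁ : ℚ) * n₁ - l₁ * m₁ = 1 := by exact_mod_cast h₁
    have h₂' : (k₂ : ℚ) * n₂ - l₂ * m₂ = 1 := by exact_mod_cast h₂
    have hTt : Tᵀ = (1 / 2 : ℚ) •
        !![(k₁ + k₂ : ℚ), k₁ - k₂, m₁ + m₂, m₁ - m₂;
           k₁ - k₂, k₁ + k₂, m₁ - m₂, m₁ + m₂;
           l₁ + l₂, l₁ - l₂, n₁ + n₂, n₁ - n₂;
           l₁ - l₂, l₁ + l₂, n₁ - n₂, n₁ + n₂] := by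
      ext i j
      fin_cases i <;> fin_cases j <;> simp [T]
    rw [hTt]
    ext i j
    fin_cases i <;> fin_cases j <;>
      simp [J4, Matrix.mul_apply, Fin.sum_univ_four, T, Matrix.vecHead, Matrix.vecTail] <;> ring_nf <;> linarith [h₁', h₂']
end

section
/- The map sending a pair (γ₁,γ₂) in the group G₀ = {(γ₁,γ₂) ∈ SL(2,ℤ)² : γ₁γ₂⁻¹ ∈ Γ(2)} to the 4×4 matrix T((γ₁,γ₂)) defined blockwise by T = (1/2)·((k₁+k₂, k₁-k₂, l₁+l₂, l₁-l₂), (k₁-k₂, k₁+k₂, l₁-l₂, l₁+l₂), (m₁+m₂, m₁-m₂, n₁+n₂, n₁-n₂), (m₁-m₂, m₁+m₂, n₁-n₂, n₁+n₂)) is a group homomorphism from G₀ into Sp(4,ℤ). -/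
open Matrix

/-- The blockwise map sending a pair of `SL(2,ℤ)` matrices to a 4×4 matrix. -/
def Tmap (γ₁ γ₂ : Matrix.SpecialLinearGroup (Fin 2) ℤ) : Matrix (Fin 4) (Fin 4) ℚ :=
  let k₁ : ℚ := ((γ₁ : Matrix (Fin 2) (Fin 2) ℤ) 0 0 : ℤ)
  let l₁ : ℚ := ((γ₁ : Matrix (Fin 2) (Fin 2) ℤ) 0 1 : ℤ)
  let m₁ : ℚ := ((γ₁ : Matrix (Fin 2) (Fin 2) ℤ) 1 0 : ℤ)
  let n₁ : ℚ := ((γ₁ : Matrix (Fin 2) (Fin 2) ℤ) 1 1 : ℤ)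
  let k₂ : ℚ := ((γ₂ : Matrix (Fin 2) (Fin 2) ℤ) 0 0 : ℤ)
  let l₂ : ℚ := ((γ₂ : Matrix (Fin 2) (Fin 2) ℤ) 0 1 : ℤ)
  let m₂ : ℚ := ((γ₂ : Matrix (Fin 2) (Fin 2) ℤ) 1 0 : ℤ)
  let n₂ : ℚ := ((γ₂ : Matrix (Fin 2) (Fin 2) ℤ) 1 1 : ℤ)
  (1 / 2 : ℚ) •
    !![k₁ + k₂, k₁ - k₂, l₁ + l₂, l₁ - l₂;
       k₁ - k₂, k₁ + k₂, l₁ - l₂, l₁ + l₂;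
       m₁ + m₂, m₁ - m₂, n₁ + n₂, n₁ - n₂;
       m₁ - m₂, m₁ + m₂, n₁ - n₂, n₁ + n₂]

/-- Abstract rational version of `Tmap`. -/
def Tm (k₁ l₁ m₁ n₁ k₂ l₂ m₂ n₂ : ℚ) : Matrix (Fin 4) (Fin 4) ℚ :=
  (1 / 2 : ℚ) •
    !![k₁ + k₂, k₁ - k₂, l₁ + l₂, l₁ - l₂;
       k₁ - k₂, k₁ + k₂, l₁ - l₂, l₁ + l₂;
       m₁ + m₂, m₁ - m₂, n₁ + n₂, n₁ - n₂;
       m₁ - m₂, m₁ + m₂, n₁ - n₂, n₁ + n₂]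

set_option maxHeartbeats 1000000 in
lemma Tm_sympl (k₁ l₁ m₁ n₁ k₂ l₂ m₂ n₂ : ℚ)
    (d1 : k₁ * n₁ - l₁ * m₁ = 1) (d2 : k₂ * n₂ - l₂ * m₂ = 1) :
    (Tm k₁ l₁ m₁ n₁ k₂ l₂ m₂ n₂)ᵀ * J4 * Tm k₁ l₁ m₁ n₁ k₂ l₂ m₂ n₂ = J4 := by
  ext i j
  fin_cases i <;> fin_cases j <;>
    simp [Tm, J4, Matrix.mul_apply, Fin.sum_univ_succ, Matrix.vecHead, Matrix.vecTail] <;>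
    first
      | linear_combination (d1 + d2) / 2
      | linear_combination (d1 - d2) / 2
      | linear_combination (d2 - d1) / 2
      | linear_combination (-d1 - d2) / 2
      | ring

set_option maxHeartbeats 1000000 in
lemma Tm_mul (k₁ l₁ m₁ n₁ k₂ l₂ m₂ n₂ a₁ b₁ c₁ e₁ a₂ b₂ c₂ e₂ : ℚ) :
    Tm (k₁*a₁ + l₁*c₁) (k₁*b₁ + l₁*e₁) (m₁*a₁ + n₁*c₁) (m₁*b₁ + n₁*e₁)
       (k₂*a₂ + l₂*c₂) (k₂*b₂ + l₂*e₂) (m₂*a₂ + n₂*c₂) (m₂*b₂ + n₂*e₂)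
      = Tm k₁ l₁ m₁ n₁ k₂ l₂ m₂ n₂ * Tm a₁ b₁ c₁ e₁ a₂ b₂ c₂ e₂ := by
  ext i j
  fin_cases i <;> fin_cases j <;>
    simp [Tm, Matrix.mul_apply, Fin.sum_univ_succ] <;> ring

set_option maxHeartbeats 1000000 in
lemma Tm_one : Tm 1 0 0 1 1 0 0 1 = 1 := by
  ext i j
  fin_cases i <;> fin_cases j <;>
    simp [Tm, Matrix.one_apply, Matrix.vecHead, Matrix.vecTail] <;> norm_num

lemma Tmap_eq_Tm (γ₁ γ₂ : Matrix.SpecialLinearGroup (Fin 2) ℤ) :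
    Tmap γ₁ γ₂ =
      Tm ((γ₁ : Matrix (Fin 2) (Fin 2) ℤ) 0 0 : ℤ) ((γ₁ : Matrix (Fin 2) (Fin 2) ℤ) 0 1 : ℤ)
         ((γ₁ : Matrix (Fin 2) (Fin 2) ℤ) 1 0 : ℤ) ((γ₁ : Matrix (Fin 2) (Fin 2) ℤ) 1 1 : ℤ)
         ((γ₂ : Matrix (Fin 2) (Fin 2) ℤ) 0 0 : ℤ) ((γ₂ : Matrix (Fin 2) (Fin 2) ℤ) 0 1 : ℤ)
         ((γ₂ : Matrix (Fin 2) (Fin 2) ℤ) 1 0 : ℤ) ((γ₂ : Matrix (Fin 2) (Fin 2) ℤ) 1 1 : ℤ) := rfl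

lemma cong_entries (γ₁ γ₂ : Matrix.SpecialLinearGroup (Fin 2) ℤ)
    (h : γ₁ * γ₂⁻¹ ∈ CongruenceSubgroup.Gamma 2) (i j : Fin 2) :
    (((γ₁ : Matrix (Fin 2) (Fin 2) ℤ) i j : ZMod 2)) = ((γ₂ : Matrix (Fin 2) (Fin 2) ℤ) i j : ZMod 2) := by
  rw [CongruenceSubgroup.Gamma_mem] at h
  obtain ⟨h00, h01, h10, h11⟩ := h
  have hg : γ₁ = (γ₁ * γ₂⁻¹) * γ₂ := by group
  have hm : (γ₁ : Matrix (Fin 2) (Fin 2) ℤ) =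
      ((γ₁ * γ₂⁻¹ : Matrix.SpecialLinearGroup (Fin 2) ℤ) : Matrix (Fin 2) (Fin 2) ℤ) *
        (γ₂ : Matrix (Fin 2) (Fin 2) ℤ) := by
    rw [← Matrix.SpecialLinearGroup.coe_mul, ← hg]
  rw [hm, Matrix.mul_apply, Fin.sum_univ_succ, Fin.sum_univ_succ]
  push_cast
  fin_cases i <;> fin_cases j <;>
    simp only [Fin.mk_zero, Fin.mk_one, Fin.succ_zero_eq_one, h00, h01, h10, h11] <;> ring

lemma half_add (a b : ℤ) (h : (a : ZMod 2) = b) :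
    (∃ z : ℤ, (1/2 : ℚ) * ((a : ℚ) + b) = z) ∧ ∃ z : ℤ, (1/2 : ℚ) * ((a : ℚ) - b) = z := by
  have h2 : (2 : ℤ) ∣ a - b := by
    have : ((a - b : ℤ) : ZMod 2) = 0 := by push_cast; rw [h]; ring
    exact (ZMod.intCast_zmod_eq_zero_iff_dvd _ _).mp this
  obtain ⟨c, hc⟩ := h2
  have ha : (a : ℚ) = 2 * c + b := by
    have : (a : ℤ) = 2 * c + b := by linarith
    exact_mod_cast congrArg (Int.cast : ℤ → ℚ) this
  exact ⟨⟨c + b, by rw [ha]; push_cast; ring⟩, ⟨c, by rw [ha]; push_cast; ring⟩⟩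

lemma mul_entry_q (γ δ : Matrix.SpecialLinearGroup (Fin 2) ℤ) (i j : Fin 2) :
    ((((γ * δ : Matrix.SpecialLinearGroup (Fin 2) ℤ) : Matrix (Fin 2) (Fin 2) ℤ) i j : ℤ) : ℚ) =
      ((γ : Matrix (Fin 2) (Fin 2) ℤ) i 0 : ℤ) * ((δ : Matrix (Fin 2) (Fin 2) ℤ) 0 j : ℤ) +
      ((γ : Matrix (Fin 2) (Fin 2) ℤ) i 1 : ℤ) * ((δ : Matrix (Fin 2) (Fin 2) ℤ) 1 j : ℤ) := by
  rw [Matrix.SpecialLinearGroup.coe_mul, Matrix.mul_apply, Fin.sum_univ_succ, Fin.sum_univ_succ]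
  push_cast
  simp

lemma det_q (γ : Matrix.SpecialLinearGroup (Fin 2) ℤ) :
    ((γ : Matrix (Fin 2) (Fin 2) ℤ) 0 0 : ℚ) * ((γ : Matrix (Fin 2) (Fin 2) ℤ) 1 1 : ℤ) -
      ((γ : Matrix (Fin 2) (Fin 2) ℤ) 0 1 : ℚ) * ((γ : Matrix (Fin 2) (Fin 2) ℤ) 1 0 : ℤ) = 1 := by
  have := γ.prop
  rw [Matrix.det_fin_two] at this
  exact_mod_cast congrArg (Int.cast : ℤ → ℚ) this

theorem Tmap_hom_into_Sp4 :
    (∀ γ₁ γ₂ : Matrix.SpecialLinearGroup (Fin 2) ℤ,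
      γ₁ * γ₂⁻¹ ∈ CongruenceSubgroup.Gamma 2 →
        (∀ i j : Fin 4, ∃ z : ℤ, Tmap γ₁ γ₂ i j = (z : ℚ)) ∧
          (Tmap γ₁ γ₂)ᵀ * J4 * Tmap γ₁ γ₂ = J4) ∧
    Tmap 1 1 = 1 ∧
    (∀ γ₁ γ₂ δ₁ δ₂ : Matrix.SpecialLinearGroup (Fin 2) ℤ,
      γ₁ * γ₂⁻¹ ∈ CongruenceSubgroup.Gamma 2 →
      δ₁ * δ₂⁻¹ ∈ CongruenceSubgroup.Gamma 2 →
        Tmap (γ₁ * δ₁) (γ₂ * δ₂) = Tmap γ₁ γ₂ * Tmap δ₁ δ₂) := by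
  refine ⟨?_, ?_, ?_⟩
  · intro γ₁ γ₂ h
    have hc := cong_entries γ₁ γ₂ h
    constructor
    · intro i j
      fin_cases i <;> fin_cases j <;>
        simp only [Tmap, Matrix.smul_apply, Matrix.cons_val', Matrix.cons_val_zero,
          Matrix.cons_val_one, Matrix.head_cons, Matrix.empty_val', Matrix.cons_val_fin_one,
          Matrix.head_fin_const, Matrix.of_apply, smul_eq_mul, Fin.mk_zero, Fin.mk_one] <;>
        first
          | exact (half_add _ _ (hc 0 0)).1 | exact (half_add _ _ (hc 0 0)).2
          | exact (half_add _ _ (hc 0 1)).1 | exact (half_add _ _ (hc 0 1)).2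
          | exact (half_add _ _ (hc 1 0)).1 | exact (half_add _ _ (hc 1 0)).2
          | exact (half_add _ _ (hc 1 1)).1 | exact (half_add _ _ (hc 1 1)).2
    · rw [Tmap_eq_Tm]
      exact Tm_sympl _ _ _ _ _ _ _ _ (det_q γ₁) (det_q γ₂)
  · rw [Tmap_eq_Tm]
    simpa using Tm_one
  · intro γ₁ γ₂ δ₁ δ₂ _ _
    rw [Tmap_eq_Tm, Tmap_eq_Tm, Tmap_eq_Tm]
    rw [mul_entry_q, mul_entry_q, mul_entry_q, mul_entry_q, mul_entry_q, mul_entry_q,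
      mul_entry_q, mul_entry_q]
    exact Tm_mul _ _ _ _ _ _ _ _ _ _ _ _ _ _ _ _
end

section
/- Let U be a unitary 2×2 matrix with entries u,v,w,t, and let 𝔸 be the 3×3 matrix ((u²,v²,2uv),(w²,t²,2tw),(uw,vt,vw+ut)). If g is a real-valued function on symmetric 2×2 complex matrices, differentiable at 0, satisfying g(U w Uᵗ) = g(w), then the gradient vector (g_x, g_y, g_z) of g at 0 (with respect to coordinates w = ((x,z),(z,y))) satisfies (g_x,g_y,g_z)ᵗ = 𝔸ᵗ(g_x,g_y,g_z)ᵗ. In particular, if 1 is not an eigenvalue of 𝔸, then the gradient of g vanishes at 0. -/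
open Matrix Complex

theorem gradient_relation_under_unitary_symmetry
    (U : Matrix (Fin 2) (Fin 2) ℂ) (hU : Uᴴ * U = 1)
    (g : Matrix (Fin 2) (Fin 2) ℂ → ℝ)
    (hg : ∀ w : Matrix (Fin 2) (Fin 2) ℂ, wᵀ = w → g (U * w * Uᵀ) = g w)
    (L : (Fin 3 → ℂ) →L[ℝ] ℝ)
    (hL : HasFDerivAt (fun c : Fin 3 → ℂ => g !![c 0, c 2; c 2, c 1]) L 0) :
    let u := U 0 0
    let v := U 0 1
    let w := U 1 0
    let t := U 1 1
    let A : Matrix (Fin 3) (Fin 3) ℂ :=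
      !![u ^ 2, v ^ 2, 2 * u * v;
         w ^ 2, t ^ 2, 2 * t * w;
         u * w, v * t, v * w + u * t]
    (∀ c : Fin 3 → ℂ, L (A.mulVec c) = L c) ∧
    ((∀ x : Fin 3 → ℂ, A.mulVec x = x → x = 0) → L = 0) := by
  intro u v w t A
  have key : ∀ c : Fin 3 → ℂ,
      g !![(A.mulVec c) 0, (A.mulVec c) 2; (A.mulVec c) 2, (A.mulVec c) 1]
        = g !![c 0, c 2; c 2, c 1] := by
    intro c
    have hsym : (!![c 0, c 2; c 2, c 1] : Matrix (Fin 2) (Fin 2) ℂ)ᵀ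
        = !![c 0, c 2; c 2, c 1] := by
      ext i j; fin_cases i <;> fin_cases j <;> simp
    have h2 := hg !![c 0, c 2; c 2, c 1] hsym
    rw [← h2]
    congr 1
    ext i j
    fin_cases i <;> fin_cases j <;>
      simp [A, Matrix.mul_apply, Matrix.mulVec, dotProduct,
        Fin.sum_univ_two, Fin.sum_univ_three, u, v, w, t] <;> ring
  classical
  let M : (Fin 3 → ℂ) →L[ℝ] (Fin 3 → ℂ) :=
    LinearMap.toContinuousLinearMap ((A.mulVecLin).restrictScalars ℝ)
  have hMc : ∀ c, M c = A.mulVec c := fun c => rfl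
  have hM0 : M (0 : Fin 3 → ℂ) = 0 := map_zero M
  have hcomp : HasFDerivAt (fun c : Fin 3 → ℂ => g !![c 0, c 2; c 2, c 1])
      (L.comp M) 0 := by
    have hMd : HasFDerivAt M M (0 : Fin 3 → ℂ) := M.hasFDerivAt
    have hL' : HasFDerivAt (fun c : Fin 3 → ℂ => g !![c 0, c 2; c 2, c 1]) L
        (M 0) := by rw [hM0]; exact hL
    have := hL'.comp (0 : Fin 3 → ℂ) hMd
    have hfun : ((fun c : Fin 3 → ℂ => g !![c 0, c 2; c 2, c 1]) ∘ ⇑M)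
        = fun c : Fin 3 → ℂ => g !![c 0, c 2; c 2, c 1] := funext fun c => key c
    rw [← hfun]
    exact this
  have hLM : L.comp M = L := hcomp.unique hL
  have part1 : ∀ c : Fin 3 → ℂ, L (A.mulVec c) = L c := by
    intro c
    have := congrFun (congrArg (fun f : (Fin 3 → ℂ) →L[ℝ] ℝ => (f : (Fin 3 → ℂ) → ℝ)) hLM) c
    simpa [hMc] using this
  refine ⟨part1, ?_⟩
  intro hinj
  -- A - 1 has injective mulVec, hence surjective
  have hinj' : Function.Injective ((A - 1).mulVecLin) := by
    intro x y hxy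
    simp only [mulVecLin_apply] at hxy
    have hz : (A - 1).mulVec (x - y) = 0 := by
      rw [mulVec_sub, hxy, sub_self]
    have hz' : A.mulVec (x - y) = x - y := by
      have := hz
      rw [sub_mulVec, one_mulVec, sub_eq_zero] at this
      exact this
    have := hinj (x - y) hz'
    exact sub_eq_zero.mp this
  have hsurj : Function.Surjective ((A - 1).mulVecLin) :=
    LinearMap.injective_iff_surjective.mp hinj'
  ext y
  obtain ⟨c, hc⟩ := hsurj y
  simp only [mulVecLin_apply, sub_mulVec, one_mulVec] at hc
  have hAc : A.mulVec c = c + y := by rw [← hc]; abel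
  have := part1 c
  rw [hAc, map_add] at this
  simpa using this
end

section
/- The Cayley transform z ↦ (z - iI)(z + iI)⁻¹ maps the Siegel upper half-space ℍ₂ = {z ∈ M(2,ℂ) : z = zᵗ, Im z positive definite} bijectively onto the open generalized unit ball {w ∈ M(2,ℂ) : w = wᵗ, I - w w* positive definite}. -/
/-!
Put `A = z + i`, `B = z - i`, so that the Cayley transform is `w = B A⁻¹`. Then
`Aᴴ (1 - wᴴ w) A = Aᴴ A - Bᴴ B = 2i (zᴴ - z)`, which is `4 Im z` when `z` is symmetric; hence
`1 - wᴴ w` is positive definite exactly when `Im z` is, and for symmetric `w` the matrix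
`1 - w wᴴ` is the transpose of `1 - wᴴ w`. Positivity of `Aᴴ A - Bᴴ B` also gives `‖B v‖ < ‖A v‖`
for `v ≠ 0`, so `A` is invertible; likewise `1 - w` is invertible when `1 - wᴴ w > 0`, and
`w ↦ 2i (1 - w)⁻¹ - i` is then an inverse of the transform.
-/

open Matrix Complex
open scoped ComplexOrder

/-- The Siegel upper half-space of symmetric 2×2 complex matrices with
positive definite imaginary part. -/
def SiegelH2 : Set (Matrix (Fin 2) (Fin 2) ℂ) :=
  {z | zᵀ = z ∧ (Matrix.of fun i j => (z i j).im : Matrix (Fin 2) (Fin 2) ℝ).PosDef}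

/-- The open generalized unit ball of symmetric 2×2 complex matrices. -/
def GenBall : Set (Matrix (Fin 2) (Fin 2) ℂ) :=
  {w | wᵀ = w ∧ (1 - w * wᴴ).PosDef}

variable {n : Type*}

lemma posDef_smul_iff_of_pos {M : Matrix n n ℂ} {c : ℝ} (hc : 0 < c) :
    (c • M).PosDef ↔ M.PosDef :=
  ⟨fun h ↦ by simpa [smul_smul, hc.ne'] using h.smul (inv_pos.2 hc), fun h ↦ h.smul hc⟩

variable [Fintype n]

lemma re_star_dotProduct_map_ofReal_mulVec (Y : Matrix n n ℝ) (v : n → ℂ) :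
    (star v ⬝ᵥ Y.map ((↑) : ℝ → ℂ) *ᵥ v).re =
      (fun i ↦ (v i).re) ⬝ᵥ Y *ᵥ (fun i ↦ (v i).re) +
        (fun i ↦ (v i).im) ⬝ᵥ Y *ᵥ (fun i ↦ (v i).im) := by
  simp only [dotProduct, mulVec, Finset.mul_sum, ← Finset.sum_add_distrib, Complex.re_sum]
  refine Finset.sum_congr rfl fun i _ ↦ Finset.sum_congr rfl fun j _ ↦ ?_
  simp

lemma posDef_map_ofReal_iff {Y : Matrix n n ℝ} : (Y.map ((↑) : ℝ → ℂ)).PosDef ↔ Y.PosDef := by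
  have hherm : (Y.map ((↑) : ℝ → ℂ)).IsHermitian ↔ Y.IsHermitian :=
    isHermitian_map_iff (fun r ↦ (Complex.conj_ofReal r).symm) Complex.ofReal_injective
  refine ⟨fun h ↦ .of_dotProduct_mulVec_pos (hherm.1 h.1) fun x hx ↦ ?_,
    fun h ↦ .of_dotProduct_mulVec_pos (hherm.2 h.1) fun v hv ↦ ?_⟩
  · have hx' : (fun i ↦ (x i : ℂ)) ≠ 0 := fun h0 ↦ hx (funext fun i ↦ by simpa using congrFun h0 i)
    simpa [re_star_dotProduct_map_ofReal_mulVec] using h.re_dotProduct_pos hx'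
  · refine RCLike.pos_iff.2 ⟨?_, (hherm.2 h.1).im_star_dotProduct_mulVec_self v⟩
    rw [RCLike.re_to_complex, re_star_dotProduct_map_ofReal_mulVec]
    have hnonneg (x : n → ℝ) : 0 ≤ x ⬝ᵥ Y *ᵥ x := by
      simpa using h.posSemidef.dotProduct_mulVec_nonneg x
    have hpos {x : n → ℝ} (hx : x ≠ 0) : 0 < x ⬝ᵥ Y *ᵥ x := by
      simpa using h.dotProduct_mulVec_pos hx
    by_cases hre : (fun i ↦ (v i).re) = 0
    · have him : (fun i ↦ (v i).im) ≠ 0 := fun him ↦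
        hv (funext fun i ↦ Complex.ext (congrFun hre i) (congrFun him i))
      exact add_pos_of_nonneg_of_pos (hnonneg _) (hpos him)
    · exact add_pos_of_pos_of_nonneg (hpos hre) (hnonneg _)

section RCLike

variable {𝕜 : Type*} [RCLike 𝕜]

lemma star_mulVec_dotProduct_lt_of_posDef {A B : Matrix n n 𝕜} (h : (Aᴴ * A - Bᴴ * B).PosDef)
    {v : n → 𝕜} (hv : v ≠ 0) : star (B *ᵥ v) ⬝ᵥ B *ᵥ v < star (A *ᵥ v) ⬝ᵥ A *ᵥ v := by
  have := h.dotProduct_mulVec_pos hv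
  rwa [sub_mulVec, dotProduct_sub, ← mulVec_mulVec, ← mulVec_mulVec, dotProduct_mulVec,
    dotProduct_mulVec (star v), ← star_mulVec, ← star_mulVec, sub_pos] at this

variable [DecidableEq n]

lemma isUnit_of_posDef_conjTranspose_mul_self_sub {A B : Matrix n n 𝕜}
    (h : (Aᴴ * A - Bᴴ * B).PosDef) : IsUnit A := by
  rw [isUnit_iff_isUnit_det, isUnit_iff_ne_zero]
  intro hdet
  obtain ⟨v, hv, hAv⟩ := exists_mulVec_eq_zero_iff.2 hdet
  have := star_mulVec_dotProduct_lt_of_posDef h hv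
  rw [hAv, star_zero, zero_dotProduct] at this
  exact (dotProduct_star_self_nonneg _).not_gt this

lemma isUnit_one_sub_of_posDef {w : Matrix n n 𝕜} (h : (1 - wᴴ * w).PosDef) :
    IsUnit (1 - w) := by
  rw [isUnit_iff_isUnit_det, isUnit_iff_ne_zero]
  intro hdet
  obtain ⟨v, hv, hwv⟩ := exists_mulVec_eq_zero_iff.2 hdet
  rw [sub_mulVec, one_mulVec, sub_eq_zero] at hwv
  have := star_mulVec_dotProduct_lt_of_posDef (A := 1) (by simpa using h) hv
  rw [← hwv, one_mulVec] at this
  exact this.false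

end RCLike

variable [DecidableEq n]

section CommRing

variable {R : Type*} [CommRing R] [PartialOrder R] [StarRing R]

lemma posDef_one_sub_conjTranspose_mul_iff {A B : Matrix n n R} (hA : IsUnit A) :
    (1 - (B * A⁻¹)ᴴ * (B * A⁻¹)).PosDef ↔ (Aᴴ * A - Bᴴ * B).PosDef := by
  rw [← hA.posDef_star_left_conjugate_iff, star_eq_conjTranspose]
  have hBA : B * A⁻¹ * A = B := nonsing_inv_mul_cancel_right A B ((isUnit_iff_isUnit_det A).1 hA)
  rw [mul_sub, sub_mul, mul_one, Matrix.mul_assoc, Matrix.mul_assoc, hBA, ← Matrix.mul_assoc,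
    ← conjTranspose_mul, hBA]

lemma posDef_one_sub_mul_conjTranspose_iff {w : Matrix n n R} (hw : wᵀ = w) :
    (1 - w * wᴴ).PosDef ↔ (1 - wᴴ * w).PosDef := by
  rw [← PosDef.transpose_iff, transpose_sub, transpose_one, transpose_mul,
    ← conjTranspose_transpose_eq_transpose_conjTranspose, hw]

end CommRing

lemma smul_inv_smul_nonsing_inv {K : Type*} [Field K] {M : Matrix n n K} (hM : IsUnit M) {c : K}
    (hc : c ≠ 0) : c • (c • M⁻¹)⁻¹ = M := by
  have : (c • M⁻¹)⁻¹ = c⁻¹ • M := by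
    refine inv_eq_left_inv ?_
    rw [smul_mul_smul_comm, inv_mul_cancel₀ hc,
      mul_nonsing_inv _ ((isUnit_iff_isUnit_det _).1 hM), one_smul]
  rw [this, smul_smul, mul_inv_cancel₀ hc, one_smul]

noncomputable def cayley (z : Matrix n n ℂ) : Matrix n n ℂ := (z - I • 1) * (z + I • 1)⁻¹

/-- `i (1 + w) (1 - w)⁻¹`, written so that `cayleyInv w + i = 2i (1 - w)⁻¹`. -/
noncomputable def cayleyInv (w : Matrix n n ℂ) : Matrix n n ℂ := (2 * I) • (1 - w)⁻¹ - I • 1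

lemma two_mul_I_ne_zero : (2 * I : ℂ) ≠ 0 := mul_ne_zero two_ne_zero I_ne_zero

lemma cayley_eq_one_sub {z : Matrix n n ℂ} (hA : IsUnit (z + I • 1)) :
    cayley z = 1 - (2 * I) • (z + I • 1)⁻¹ := by
  have : z - I • 1 = (z + I • 1) - (2 * I) • 1 := by rw [two_mul, add_smul]; abel
  rw [cayley, this, sub_mul, mul_nonsing_inv _ ((isUnit_iff_isUnit_det _).1 hA), smul_mul_assoc,
    one_mul]

lemma cayleyInv_add_I (w : Matrix n n ℂ) : cayleyInv w + I • 1 = (2 * I) • (1 - w)⁻¹ :=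
  sub_add_cancel _ _

lemma isUnit_cayleyInv_add_I {w : Matrix n n ℂ} (hw : IsUnit (1 - w)) :
    IsUnit (cayleyInv w + I • 1) := by
  rw [cayleyInv_add_I]
  exact (isUnit_nonsing_inv_iff.2 hw).smul (Units.mk0 _ two_mul_I_ne_zero)

lemma cayleyInv_cayley {z : Matrix n n ℂ} (hA : IsUnit (z + I • 1)) :
    cayleyInv (cayley z) = z := by
  rw [cayleyInv, cayley_eq_one_sub hA, sub_sub_cancel,
    smul_inv_smul_nonsing_inv hA two_mul_I_ne_zero, add_sub_cancel_right]

lemma cayley_cayleyInv {w : Matrix n n ℂ} (hw : IsUnit (1 - w)) : cayley (cayleyInv w) = w := by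
  rw [cayley_eq_one_sub (isUnit_cayleyInv_add_I hw), cayleyInv_add_I,
    smul_inv_smul_nonsing_inv hw two_mul_I_ne_zero, sub_sub_cancel]

lemma transpose_cayley {z : Matrix n n ℂ} (hz : zᵀ = z) (hA : IsUnit (z + I • 1)) :
    (cayley z)ᵀ = cayley z := by
  rw [cayley_eq_one_sub hA, transpose_sub, transpose_smul, transpose_nonsing_inv, transpose_add,
    transpose_smul, transpose_one, hz]

lemma transpose_cayleyInv {w : Matrix n n ℂ} (hw : wᵀ = w) : (cayleyInv w)ᵀ = cayleyInv w := by
  rw [cayleyInv, transpose_sub, transpose_smul, transpose_nonsing_inv, transpose_sub,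
    transpose_smul, transpose_one, hw]

lemma conjTranspose_mul_add_I_sub_conjTranspose_mul_sub_I {z : Matrix n n ℂ} (hz : zᵀ = z) :
    (z + I • 1)ᴴ * (z + I • 1) - (z - I • 1)ᴴ * (z - I • 1) =
      (4 : ℝ) • (z.map im).map ((↑) : ℝ → ℂ) := by
  have hexpand :
      (z + I • 1)ᴴ * (z + I • 1) - (z - I • 1)ᴴ * (z - I • 1) = (2 * I) • (zᴴ - z) := by
    simp only [conjTranspose_add, conjTranspose_sub, conjTranspose_smul, conjTranspose_one,
      star_def, conj_I, add_mul, mul_add, sub_mul, mul_sub, smul_mul_assoc, mul_smul_comm,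
      one_mul, mul_one]
    module
  rw [hexpand]
  ext i j
  have hij : z j i = z i j := by rw [← transpose_apply z i j, hz]
  simp only [Matrix.smul_apply, Matrix.sub_apply, conjTranspose_apply, hij, map_apply, smul_eq_mul,
    real_smul, RCLike.star_def]
  rw [← neg_sub, sub_conj]
  push_cast
  linear_combination (-4 * ((z i j).im : ℂ)) * I_sq

lemma isUnit_add_I_of_posDef_im {z : Matrix n n ℂ} (hz : zᵀ = z) (hY : (z.map im).PosDef) :
    IsUnit (z + I • 1) :=
  isUnit_of_posDef_conjTranspose_mul_self_sub (B := z - I • 1) <| by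
    rw [conjTranspose_mul_add_I_sub_conjTranspose_mul_sub_I hz, posDef_smul_iff_of_pos four_pos,
      posDef_map_ofReal_iff]
    exact hY

lemma posDef_one_sub_conjTranspose_cayley_mul_iff {z : Matrix n n ℂ} (hz : zᵀ = z)
    (hA : IsUnit (z + I • 1)) : (1 - (cayley z)ᴴ * cayley z).PosDef ↔ (z.map im).PosDef := by
  rw [cayley, posDef_one_sub_conjTranspose_mul_iff hA,
    conjTranspose_mul_add_I_sub_conjTranspose_mul_sub_I hz, posDef_smul_iff_of_pos four_pos,
    posDef_map_ofReal_iff]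

theorem cayley_bijOn :
    Set.BijOn (fun z : Matrix (Fin 2) (Fin 2) ℂ =>
      (z - Complex.I • (1 : Matrix (Fin 2) (Fin 2) ℂ)) *
        (z + Complex.I • (1 : Matrix (Fin 2) (Fin 2) ℂ))⁻¹)
      SiegelH2 GenBall := by
  change Set.BijOn cayley SiegelH2 GenBall
  have hzI : ∀ z ∈ SiegelH2, IsUnit (z + I • 1) := fun z hz ↦ isUnit_add_I_of_posDef_im hz.1 hz.2
  have hwI : ∀ w ∈ GenBall, IsUnit (1 - w) := fun w hw ↦
    isUnit_one_sub_of_posDef ((posDef_one_sub_mul_conjTranspose_iff hw.1).1 hw.2)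
  refine Set.InvOn.bijOn ⟨fun z hz ↦ cayleyInv_cayley (hzI z hz),
    fun w hw ↦ cayley_cayleyInv (hwI w hw)⟩ (fun z hz ↦ ?_) (fun w hw ↦ ?_)
  · have hw := transpose_cayley hz.1 (hzI z hz)
    exact ⟨hw, (posDef_one_sub_mul_conjTranspose_iff hw).2
      ((posDef_one_sub_conjTranspose_cayley_mul_iff hz.1 (hzI z hz)).2 hz.2)⟩
  · have hz := transpose_cayleyInv hw.1
    have hA := isUnit_cayleyInv_add_I (hwI w hw)
    refine ⟨hz, (posDef_one_sub_conjTranspose_cayley_mul_iff hz hA).1 ?_⟩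
    rw [cayley_cayleyInv (hwI w hw)]
    exact (posDef_one_sub_mul_conjTranspose_iff hw.1).1 hw.2
end
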